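/- arXiv:2304.08790 — 2 statements merged into one kernel-verified Lean document; each statement's English description precedes it below -/
import Mathlib

section
/- Fix σ ∈ [0,1]. For all reals 0 < d ≤ c < u ≤ u', one has Φ^f(c,u) ≤ Φ^f(d,u') and Φ^g(c,u) ≤ Φ^g(d,u'); in particular, on any sub-interval [c,u] of [d,u'] the chord on the larger interval satisfies f̂(d,u',t) ≥ f̂(c,u,t) and ĝ(d,u',t) ≤ ĝ(c,u,t) for every t ∈ [c,u]. -/
/-- f(t) = t^(σ-1) (real power). -/
noncomputable def fCNL (σ t : ℝ) : ℝ := t ^ (σ - 1)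

/-- g(t) = t^σ (real power). -/
noncomputable def gCNL (σ t : ℝ) : ℝ := t ^ σ

/-- Chord (linear interpolation) approximation of f on [c,u], evaluated at t. -/
noncomputable def fhat (σ c u t : ℝ) : ℝ :=
  fCNL σ c + ((fCNL σ u - fCNL σ c) / (u - c)) * (t - c)

/-- Chord (linear interpolation) approximation of g on [c,u], evaluated at t. -/
noncomputable def ghat (σ c u t : ℝ) : ℝ :=
  gCNL σ c + ((gCNL σ u - gCNL σ c) / (u - c)) * (t - c)

/-- Pointwise relative error of the chord approximation of f. -/
noncomputable def phiF (σ c u t : ℝ) : ℝ := (fhat σ c u t - fCNL σ t) / fCNL σ t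

/-- Pointwise relative error of the chord approximation of g. -/
noncomputable def phiG (σ c u t : ℝ) : ℝ := (gCNL σ t - ghat σ c u t) / gCNL σ t

/-- Maximum relative error of the chord approximation of f on [c,u]. -/
noncomputable def PhiF (σ c u : ℝ) : ℝ := sSup (phiF σ c u '' Set.Icc c u)

/-- Maximum relative error of the chord approximation of g on [c,u]. -/
noncomputable def PhiG (σ c u : ℝ) : ℝ := sSup (phiG σ c u '' Set.Icc c u)

/-!
A convex `f` lies below its chord on `[d, u']`, in particular at `c` and `u`. On `[c, u]` the
chord of `f` is a convex combination of `f c` and `f u`, and it reproduces the affine chord on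
`[d, u']`; hence the larger chord dominates the smaller one there. Dividing by `f t > 0` compares
the relative errors pointwise, and the suprema follow because `[c, u] ⊆ [d, u']`. The concave `g`
is the mirror image.
-/

open Set Real

noncomputable def chord (F : ℝ → ℝ) (c u t : ℝ) : ℝ :=
  F c + (F u - F c) / (u - c) * (t - c)

lemma chord_eq_weighted (F : ℝ → ℝ) {c u : ℝ} (hcu : c ≠ u) (t : ℝ) :
    chord F c u t = (u - t) / (u - c) * F c + (t - c) / (u - c) * F u := by
  have : u - c ≠ 0 := sub_ne_zero.2 hcu.symm
  unfold chord
  field_simp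
  ring

lemma chord_neg (F : ℝ → ℝ) (c u t : ℝ) : chord (-F) c u t = -chord F c u t := by
  simp only [chord, Pi.neg_apply]
  ring

lemma chord_le_chord_of_le {F G : ℝ → ℝ} {c u t : ℝ} (hcu : c < u) (ht : t ∈ Icc c u)
    (hc : F c ≤ G c) (hu : F u ≤ G u) : chord F c u t ≤ chord G c u t := by
  have hlen : 0 ≤ u - c := (sub_pos.2 hcu).le
  have hwc : 0 ≤ (u - t) / (u - c) := div_nonneg (sub_nonneg.2 ht.2) hlen
  have hwu : 0 ≤ (t - c) / (u - c) := div_nonneg (sub_nonneg.2 ht.1) hlen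
  rw [chord_eq_weighted F hcu.ne, chord_eq_weighted G hcu.ne]
  gcongr

lemma chord_chord (F : ℝ → ℝ) (d u' : ℝ) {c u : ℝ} (hcu : c ≠ u) (t : ℝ) :
    chord (chord F d u') c u t = chord F d u' t := by
  have : u - c ≠ 0 := sub_ne_zero.2 hcu.symm
  unfold chord
  field_simp
  ring

lemma ConvexOn.le_chord {s : Set ℝ} {F : ℝ → ℝ} (hF : ConvexOn ℝ s F) {c u t : ℝ} (hc : c ∈ s)
    (hu : u ∈ s) (ht : t ∈ Icc c u) : F t ≤ chord F c u t := by
  rcases eq_or_lt_of_le ht.1 with rfl | hct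
  · simp [chord]
  rcases eq_or_lt_of_le ht.2 with rfl | htu
  · simp [chord, (sub_pos.2 hct).ne']
  have hbelow := hF.secant_mono_aux1 hc hu hct htu
  rw [chord_eq_weighted F (hct.trans htu).ne, div_mul_eq_mul_div, div_mul_eq_mul_div,
    ← add_div, le_div_iff₀ (sub_pos.2 (hct.trans htu))]
  linarith

lemma ConvexOn.chord_le_chord {s : Set ℝ} {F : ℝ → ℝ} (hF : ConvexOn ℝ s F) {d c u u' t : ℝ}
    (hd : d ∈ s) (hu' : u' ∈ s) (hdc : d ≤ c) (hcu : c < u) (huu' : u ≤ u')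
    (ht : t ∈ Icc c u) : chord F c u t ≤ chord F d u' t :=
  calc chord F c u t ≤ chord (chord F d u') c u t :=
        chord_le_chord_of_le hcu ht (hF.le_chord hd hu' ⟨hdc, hcu.le.trans huu'⟩)
          (hF.le_chord hd hu' ⟨hdc.trans hcu.le, huu'⟩)
    _ = chord F d u' t := chord_chord F d u' hcu.ne t

lemma ConcaveOn.chord_le_chord {s : Set ℝ} {F : ℝ → ℝ} (hF : ConcaveOn ℝ s F) {d c u u' t : ℝ}
    (hd : d ∈ s) (hu' : u' ∈ s) (hdc : d ≤ c) (hcu : c < u) (huu' : u ≤ u')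
    (ht : t ∈ Icc c u) : chord F d u' t ≤ chord F c u t := by
  have hneg := hF.neg.chord_le_chord hd hu' hdc hcu huu' ht
  rwa [chord_neg, chord_neg, neg_le_neg_iff] at hneg

/-- `x ^ p = exp (p * log x)` is a convex nonincreasing function of the concave `log`. -/
lemma convexOn_rpow_of_nonpos {p : ℝ} (hp : p ≤ 0) : ConvexOn ℝ (Ioi 0) fun x : ℝ => x ^ p := by
  have himage : log '' Ioi 0 = univ :=
    eq_univ_of_forall fun y => ⟨exp y, exp_pos y, log_exp y⟩
  have hexp : ConvexOn ℝ (log '' Ioi 0) fun y => exp (p * y) := by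
    rw [himage]
    exact convexOn_exp.comp_linearMap (p • LinearMap.id)
  refine (hexp.comp_concaveOn strictConcaveOn_log_Ioi.concaveOn ?_).congr ?_
  · exact fun a _ b _ hab => exp_le_exp.2 (mul_le_mul_of_nonpos_left hab hp)
  · intro x hx
    simp [rpow_def_of_pos hx, mul_comm]

lemma csSup_image_le_csSup_image {α β : Type*} [ConditionallyCompleteLattice β] {φ ψ : α → β}
    {A B : Set α} (hA : A.Nonempty) (hAB : A ⊆ B) (hψ : BddAbove (ψ '' B))
    (h : ∀ t ∈ A, φ t ≤ ψ t) : sSup (φ '' A) ≤ sSup (ψ '' B) :=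
  csSup_le (hA.image φ) <| forall_mem_image.2 fun t ht =>
    (h t ht).trans (le_csSup hψ (mem_image_of_mem ψ (hAB ht)))

lemma continuousOn_phiF (σ c u : ℝ) : ContinuousOn (phiF σ c u) (Ioi 0) := by
  unfold phiF fhat fCNL
  fun_prop (disch := intro x hx; first | exact hx.ne' | exact (rpow_pos_of_pos hx _).ne')

lemma continuousOn_phiG (σ c u : ℝ) : ContinuousOn (phiG σ c u) (Ioi 0) := by
  unfold phiG ghat gCNL
  fun_prop (disch := intro x hx; first | exact hx.ne' | exact (rpow_pos_of_pos hx _).ne')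

lemma fhat_le_fhat_of_subinterval {σ d c u u' t : ℝ} (hσ1 : σ ≤ 1) (hd : 0 < d) (hdc : d ≤ c)
    (hcu : c < u) (huu' : u ≤ u') (ht : t ∈ Icc c u) : fhat σ c u t ≤ fhat σ d u' t :=
  (convexOn_rpow_of_nonpos (sub_nonpos.2 hσ1)).chord_le_chord hd
    (hd.trans_le (hdc.trans (hcu.le.trans huu'))) hdc hcu huu' ht

lemma ghat_le_ghat_of_subinterval {σ d c u u' t : ℝ} (hσ0 : 0 ≤ σ) (hσ1 : σ ≤ 1) (hd : 0 < d)
    (hdc : d ≤ c) (hcu : c < u) (huu' : u ≤ u') (ht : t ∈ Icc c u) :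
    ghat σ d u' t ≤ ghat σ c u t :=
  (concaveOn_rpow hσ0 hσ1).chord_le_chord hd.le
    (hd.le.trans (hdc.trans (hcu.le.trans huu'))) hdc hcu huu' ht

/-- Monotonicity of the maximum relative error under interval inclusion,
with the pointwise chord comparison on the sub-interval. -/
theorem stmt_6 (σ : ℝ) (hσ0 : 0 ≤ σ) (hσ1 : σ ≤ 1) :
    ∀ d c u u' : ℝ, 0 < d → d ≤ c → c < u → u ≤ u' →
      PhiF σ c u ≤ PhiF σ d u' ∧ PhiG σ c u ≤ PhiG σ d u' ∧
      ∀ t ∈ Set.Icc c u, fhat σ c u t ≤ fhat σ d u' t ∧ ghat σ d u' t ≤ ghat σ c u t := by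
  intro d c u u' hd hdc hcu huu'
  have hfhat t (ht : t ∈ Icc c u) := fhat_le_fhat_of_subinterval hσ1 hd hdc hcu huu' ht
  have hghat t (ht : t ∈ Icc c u) := ghat_le_ghat_of_subinterval hσ0 hσ1 hd hdc hcu huu' ht
  have hne : (Icc c u).Nonempty := nonempty_Icc.2 hcu.le
  have hsub : Icc c u ⊆ Icc d u' := Icc_subset_Icc hdc huu'
  have hpos : Icc d u' ⊆ Ioi 0 := fun t ht => hd.trans_le ht.1
  refine ⟨csSup_image_le_csSup_image hne hsub ?_ fun t ht => ?_,
    csSup_image_le_csSup_image hne hsub ?_ fun t ht => ?_, fun t ht => ⟨hfhat t ht, hghat t ht⟩⟩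
  · exact (isCompact_Icc.image_of_continuousOn ((continuousOn_phiF σ d u').mono hpos)).bddAbove
  · have ht₀ : 0 < t := hpos (hsub ht)
    unfold phiF fCNL
    gcongr
    exact hfhat t ht
  · exact (isCompact_Icc.image_of_continuousOn ((continuousOn_phiG σ d u').mono hpos)).bddAbove
  · have ht₀ : 0 < t := hpos (hsub ht)
    unfold phiG gCNL
    gcongr
    exact hghat t ht
end

section
/- Fix σ ∈ (0,1), ε ∈ (0, 1 − 2^(σ−1)) and reals 0 < L < U. Let K ≥ 1 and let L = c_1 < c_2 < ... < c_{K+1} = U be the greedy breakpoints: for each k ∈ {1,...,K}, c_{k+1} is the largest u ∈ (c_k, U] such that Φ^f(c_k, u) ≤ ε and Φ^g(c_k, u) ≤ ε. Let t^f > 1 satisfy ((t^f)^(σ−1) + 1)/((t^f) + 1)^(σ−1) = 2^(2−σ)·(1+ε) and let t^g > 1 satisfy ((t^g)^σ + 1)/((t^g) + 1)^σ = 2^(1−σ)·(1−ε). Then ln(U/L)·max{1/ln(t^f), 1/ln(t^g)} ≤ K ≤ ln(U/L)·((1−σ)/ln(1+ε) − σ/ln(1−ε)) + 1. -/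
/-!
At the midpoint of `[c, u]` the relative errors equal `R_{σ-1}(u/c) / 2^(2-σ) - 1` and
`1 - R_σ(u/c) / 2^(1-σ)`, where `R_a(r) = (r^a + 1) / (r + 1)^a` is increasing on `[1, ∞)` for
`a < 0` and decreasing for `0 < a < 1`. Hence a greedy step can never grow by more than the
factor `t^f` (resp. `t^g`), and the lower bound follows by comparing logarithms.
Conversely the chord lies between its endpoint values, so the relative errors on `[c, u]` are at
most `(c/u)^(σ-1) - 1` and `1 - (c/u)^σ`. Every greedy step except the last therefore grows by
at least `exp ℓ` with `ℓ = min (log (1+ε) / (1-σ)) (-log (1-ε) / σ)`, and `1/ℓ` is at most the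
sum of the two reciprocals, which is the upper bound.
-/

open Real Set

noncomputable def rpowSumRatio (a r : ℝ) : ℝ := (r ^ a + 1) / (r + 1) ^ a

lemma rpowSumRatio_div {a c u : ℝ} (hc : 0 < c) (hu : 0 < u) :
    (c ^ a + u ^ a) / (c + u) ^ a = rpowSumRatio a (u / c) := by
  have hcu : c + u = c * (u / c + 1) := by
    rw [mul_add, mul_div_cancel₀ _ hc.ne', mul_one, add_comm]
  rw [rpowSumRatio, hcu, mul_rpow hc.le (by positivity), div_rpow hu.le hc.le]
  have : 0 < c ^ a := rpow_pos_of_pos hc a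
  field_simp
  ring

lemma hasDerivAt_rpowSumRatio (a : ℝ) {r : ℝ} (hr : 0 < r) :
    HasDerivAt (rpowSumRatio a)
      (a * (r ^ (a - 1) - 1) * (r + 1) ^ (a - 1) / ((r + 1) ^ a) ^ 2) r := by
  have hr1 : 0 < r + 1 := by linarith
  have hnum : HasDerivAt (fun x : ℝ => x ^ a + 1) (a * r ^ (a - 1)) r :=
    (hasDerivAt_rpow_const (Or.inl hr.ne')).add_const 1
  have hden : HasDerivAt (fun x : ℝ => (x + 1) ^ a) (a * (r + 1) ^ (a - 1)) r := by
    simpa [Function.comp_def] using (hasDerivAt_rpow_const (p := a) (Or.inl hr1.ne')).comp r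
      ((hasDerivAt_id r).add_const 1)
  refine (hnum.div hden (rpow_pos_of_pos hr1 a).ne').congr_deriv ?_
  have hr1a : (r + 1) ^ a = (r + 1) ^ (a - 1) * (r + 1) := by
    rw [← rpow_add_one hr1.ne']; ring_nf
  have hra : r ^ a = r ^ (a - 1) * r := by
    rw [← rpow_add_one hr.ne']; ring_nf
  rw [hr1a, hra]
  ring

lemma rpowSumRatio_strictMonoOn_of_neg {a : ℝ} (ha : a < 0) :
    StrictMonoOn (rpowSumRatio a) (Ici 1) := by
  refine strictMonoOn_of_deriv_pos (convex_Ici 1) (fun r hr => ?_) fun r hr => ?_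
  · exact (hasDerivAt_rpowSumRatio a (zero_lt_one.trans_le hr)).continuousAt.continuousWithinAt
  · rw [interior_Ici, mem_Ioi] at hr
    rw [(hasDerivAt_rpowSumRatio a (zero_lt_one.trans hr)).deriv]
    have : r ^ (a - 1) < 1 := rpow_lt_one_of_one_lt_of_neg hr (by linarith)
    have hpos : 0 < a * (r ^ (a - 1) - 1) := mul_pos_of_neg_of_neg ha (by linarith)
    exact div_pos (mul_pos hpos (rpow_pos_of_pos (by linarith) _)) (by positivity)

lemma rpowSumRatio_strictAntiOn {a : ℝ} (ha0 : 0 < a) (ha1 : a < 1) :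
    StrictAntiOn (rpowSumRatio a) (Ici 1) := by
  refine strictAntiOn_of_deriv_neg (convex_Ici 1) (fun r hr => ?_) fun r hr => ?_
  · exact (hasDerivAt_rpowSumRatio a (zero_lt_one.trans_le hr)).continuousAt.continuousWithinAt
  · rw [interior_Ici, mem_Ioi] at hr
    rw [(hasDerivAt_rpowSumRatio a (zero_lt_one.trans hr)).deriv]
    have : r ^ (a - 1) < 1 := rpow_lt_one_of_one_lt_of_neg hr (by linarith)
    have hneg : a * (r ^ (a - 1) - 1) < 0 := mul_neg_of_pos_of_neg ha0 (by linarith)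
    exact div_neg_of_neg_of_pos (mul_neg_of_neg_of_pos hneg (rpow_pos_of_pos (by linarith) _))
      (by positivity)

lemma chord_midpoint (φ : ℝ → ℝ) (c u : ℝ) :
    φ c + (φ u - φ c) / (u - c) * ((c + u) / 2 - c) = (φ c + φ u) / 2 := by
  rcases eq_or_ne u c with rfl | hne
  · ring
  · field_simp [sub_ne_zero.mpr hne]
    ring

lemma phiF_midpoint {σ c u : ℝ} (hc : 0 < c) (hu : 0 < u) :
    phiF σ c u ((c + u) / 2) = rpowSumRatio (σ - 1) (u / c) / 2 ^ (2 - σ) - 1 := by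
  have hmid : fhat σ c u ((c + u) / 2) = (c ^ (σ - 1) + u ^ (σ - 1)) / 2 :=
    chord_midpoint (fCNL σ) c u
  have h2 : (2 : ℝ) ^ (2 - σ) = 2 / 2 ^ (σ - 1) := by
    rw [show 2 - σ = 1 - (σ - 1) by ring, rpow_sub two_pos, rpow_one]
  have : 0 < (c + u) ^ (σ - 1) := rpow_pos_of_pos (by linarith) _
  have : 0 < (2 : ℝ) ^ (σ - 1) := rpow_pos_of_pos two_pos _
  rw [phiF, hmid, fCNL, div_rpow (by linarith) zero_le_two, ← rpowSumRatio_div hc hu, h2]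
  field_simp

lemma phiG_midpoint {σ c u : ℝ} (hc : 0 < c) (hu : 0 < u) :
    phiG σ c u ((c + u) / 2) = 1 - rpowSumRatio σ (u / c) / 2 ^ (1 - σ) := by
  have hmid : ghat σ c u ((c + u) / 2) = (c ^ σ + u ^ σ) / 2 :=
    chord_midpoint (gCNL σ) c u
  have h2 : (2 : ℝ) ^ (1 - σ) = 2 / 2 ^ σ := by rw [rpow_sub two_pos, rpow_one]
  have : 0 < (c + u) ^ σ := rpow_pos_of_pos (by linarith) _
  have : 0 < (2 : ℝ) ^ σ := rpow_pos_of_pos two_pos _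
  rw [phiG, hmid, gCNL, div_rpow (by linarith) zero_le_two, ← rpowSumRatio_div hc hu, h2]
  field_simp

section ChordError

variable {σ c u t : ℝ}

lemma phiF_le (hσ : σ ≤ 1) (hc : 0 < c) (ht : t ∈ Icc c u) :
    phiF σ c u t ≤ (c / u) ^ (σ - 1) - 1 := by
  have ht0 : 0 < t := hc.trans_le ht.1
  have hu : 0 < u := ht0.trans_le ht.2
  have hft : 0 < t ^ (σ - 1) := rpow_pos_of_pos ht0 _
  have hfu_le_ft : u ^ (σ - 1) ≤ t ^ (σ - 1) := rpow_le_rpow_of_nonpos ht0 ht.2 (by linarith)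
  have hfu_le_fc : u ^ (σ - 1) ≤ c ^ (σ - 1) :=
    rpow_le_rpow_of_nonpos hc (ht.1.trans ht.2) (by linarith)
  have hchord : fhat σ c u t ≤ c ^ (σ - 1) := by
    have : (u ^ (σ - 1) - c ^ (σ - 1)) / (u - c) * (t - c) ≤ 0 :=
      mul_nonpos_of_nonpos_of_nonneg
        (div_nonpos_of_nonpos_of_nonneg (by linarith) (by linarith [ht.1, ht.2]))
        (by linarith [ht.1])
    rw [fhat, fCNL, fCNL]
    linarith
  calc phiF σ c u t = fhat σ c u t / t ^ (σ - 1) - 1 := by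
        rw [phiF, fCNL, sub_div, div_self hft.ne']
    _ ≤ c ^ (σ - 1) / u ^ (σ - 1) - 1 := by
        gcongr ?_ - 1
        exact div_le_div₀ (rpow_pos_of_pos hc _).le hchord (rpow_pos_of_pos hu _) hfu_le_ft
    _ = (c / u) ^ (σ - 1) - 1 := by rw [div_rpow hc.le hu.le]

lemma phiG_le (hσ : 0 ≤ σ) (hc : 0 < c) (ht : t ∈ Icc c u) :
    phiG σ c u t ≤ 1 - (c / u) ^ σ := by
  have ht0 : 0 < t := hc.trans_le ht.1
  have hu : 0 < u := ht0.trans_le ht.2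
  have hgt : 0 < t ^ σ := rpow_pos_of_pos ht0 _
  have hgt_le_gu : t ^ σ ≤ u ^ σ := rpow_le_rpow ht0.le ht.2 hσ
  have hgc_le_gu : c ^ σ ≤ u ^ σ := rpow_le_rpow hc.le (ht.1.trans ht.2) hσ
  have hchord : c ^ σ ≤ ghat σ c u t := by
    have : 0 ≤ (u ^ σ - c ^ σ) / (u - c) * (t - c) :=
      mul_nonneg (div_nonneg (by linarith) (by linarith [ht.1, ht.2])) (by linarith [ht.1])
    rw [ghat, gCNL, gCNL]
    linarith
  calc phiG σ c u t = 1 - ghat σ c u t / t ^ σ := by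
        rw [phiG, gCNL, sub_div, div_self hgt.ne']
    _ ≤ 1 - c ^ σ / u ^ σ := by
        gcongr 1 - ?_
        exact div_le_div₀ ((rpow_pos_of_pos hc _).le.trans hchord) hchord hgt hgt_le_gu
    _ = 1 - (c / u) ^ σ := by rw [div_rpow hc.le hu.le]

lemma PhiF_le (hσ : σ ≤ 1) (hc : 0 < c) (hcu : c ≤ u) :
    PhiF σ c u ≤ (c / u) ^ (σ - 1) - 1 :=
  csSup_le ((nonempty_Icc.2 hcu).image _) (forall_mem_image.2 fun _ ht => phiF_le hσ hc ht)

lemma PhiG_le (hσ : 0 ≤ σ) (hc : 0 < c) (hcu : c ≤ u) :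
    PhiG σ c u ≤ 1 - (c / u) ^ σ :=
  csSup_le ((nonempty_Icc.2 hcu).image _) (forall_mem_image.2 fun _ ht => phiG_le hσ hc ht)

lemma phiF_le_PhiF (hσ : σ ≤ 1) (hc : 0 < c) (ht : t ∈ Icc c u) : phiF σ c u t ≤ PhiF σ c u :=
  le_csSup ⟨_, forall_mem_image.2 fun _ hs => phiF_le hσ hc hs⟩ (mem_image_of_mem _ ht)

lemma phiG_le_PhiG (hσ : 0 ≤ σ) (hc : 0 < c) (ht : t ∈ Icc c u) : phiG σ c u t ≤ PhiG σ c u :=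
  le_csSup ⟨_, forall_mem_image.2 fun _ hs => phiG_le hσ hc hs⟩ (mem_image_of_mem _ ht)

end ChordError

section GreedyStep

variable {σ ε c u t : ℝ}

lemma le_mul_of_PhiF_le (hσ : σ < 1) (hc : 0 < c) (ht : 1 < t)
    (htε : rpowSumRatio (σ - 1) t = 2 ^ (2 - σ) * (1 + ε)) (hPhi : PhiF σ c u ≤ ε) :
    u ≤ c * t := by
  by_contra! hu
  have hcu : c < u := by nlinarith
  have hr : t < u / c := by rw [lt_div_iff₀ hc]; linarith
  have hmono : rpowSumRatio (σ - 1) t < rpowSumRatio (σ - 1) (u / c) :=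
    rpowSumRatio_strictMonoOn_of_neg (by linarith) ht.le (ht.trans hr).le hr
  have hmid : ε < phiF σ c u ((c + u) / 2) := by
    rw [phiF_midpoint hc (hc.trans hcu), lt_sub_iff_add_lt, lt_div_iff₀ (by positivity)]
    linarith
  linarith [phiF_le_PhiF hσ.le hc (u := u) (t := (c + u) / 2) ⟨by linarith, by linarith⟩]

lemma le_mul_of_PhiG_le (hσ0 : 0 < σ) (hσ1 : σ < 1) (hc : 0 < c) (ht : 1 < t)
    (htε : rpowSumRatio σ t = 2 ^ (1 - σ) * (1 - ε)) (hPhi : PhiG σ c u ≤ ε) :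
    u ≤ c * t := by
  by_contra! hu
  have hcu : c < u := by nlinarith
  have hr : t < u / c := by rw [lt_div_iff₀ hc]; linarith
  have hmono : rpowSumRatio σ (u / c) < rpowSumRatio σ t :=
    rpowSumRatio_strictAntiOn hσ0 hσ1 ht.le (ht.trans hr).le hr
  have hmid : ε < phiG σ c u ((c + u) / 2) := by
    rw [phiG_midpoint hc (hc.trans hcu), lt_sub_comm, div_lt_iff₀ (by positivity)]
    linarith
  linarith [phiG_le_PhiG hσ0.le hc (u := u) (t := (c + u) / 2) ⟨by linarith, by linarith⟩]

lemma PhiF_le_of_log_div_le (hσ : σ < 1) (hε : 0 < 1 + ε) (hc : 0 < c) (hcu : c ≤ u)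
    (hlog : log (u / c) ≤ log (1 + ε) / (1 - σ)) : PhiF σ c u ≤ ε := by
  have hexp : log (c / u) * (σ - 1) ≤ log (1 + ε) := by
    rw [← inv_div, log_inv]
    have := (le_div_iff₀ (sub_pos.2 hσ)).1 hlog
    linarith
  have : (c / u) ^ (σ - 1) ≤ 1 + ε := by
    rw [rpow_def_of_pos (div_pos hc (hc.trans_le hcu)), ← exp_log hε]
    exact exp_le_exp.2 hexp
  linarith [PhiF_le hσ.le hc hcu]

lemma PhiG_le_of_log_div_le (hσ : 0 < σ) (hε : 0 < 1 - ε) (hc : 0 < c) (hcu : c ≤ u)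
    (hlog : log (u / c) ≤ -log (1 - ε) / σ) : PhiG σ c u ≤ ε := by
  have hexp : log (1 - ε) ≤ log (c / u) * σ := by
    rw [← inv_div, log_inv]
    have := (le_div_iff₀ hσ).1 hlog
    linarith
  have : 1 - ε ≤ (c / u) ^ σ := by
    rw [rpow_def_of_pos (div_pos hc (hc.trans_le hcu)), ← exp_log hε]
    exact exp_le_exp.2 hexp
  linarith [PhiG_le hσ.le hc hcu]

end GreedyStep

lemma log_div_le_of_le_mul {x : ℕ → ℝ} {t : ℝ} {n : ℕ} (h0 : 0 < x 0) (hn : 0 < x n)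
    (ht : 0 < t) (hx : ∀ k < n, x (k + 1) ≤ t * x k) : log (x n / x 0) ≤ n * log t := by
  rw [← log_pow, log_le_log_iff (div_pos hn h0) (by positivity), div_le_iff₀ h0]
  exact le_geom ht.le n hx

lemma mul_log_le_log_div_of_mul_le {x : ℕ → ℝ} {t : ℝ} {n : ℕ} (h0 : 0 < x 0) (ht : 0 < t)
    (hx : ∀ k < n, t * x k ≤ x (k + 1)) : n * log t ≤ log (x n / x 0) := by
  have hgeom := geom_le ht.le n hx
  have hn : 0 < x n := (by positivity : 0 < t ^ n * x 0).trans_le hgeom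
  rw [← log_pow, log_le_log_iff (by positivity) (div_pos hn h0), le_div_iff₀ h0]
  exact hgeom

def IsGreedyPartition (σ ε U : ℝ) (K : ℕ) (c : ℕ → ℝ) : Prop :=
  ∀ k, 1 ≤ k → k ≤ K →
    c (k + 1) ∈ Set.Ioc (c k) U ∧
    PhiF σ (c k) (c (k + 1)) ≤ ε ∧ PhiG σ (c k) (c (k + 1)) ≤ ε ∧
    ∀ u ∈ Set.Ioc (c k) U, PhiF σ (c k) u ≤ ε → PhiG σ (c k) u ≤ ε → u ≤ c (k + 1)

namespace IsGreedyPartition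

variable {σ ε U : ℝ} {K : ℕ} {c : ℕ → ℝ}

lemma pos (h : IsGreedyPartition σ ε U K c) (hc1 : 0 < c 1) : ∀ k ≤ K, 0 < c (k + 1)
  | 0, _ => hc1
  | k + 1, hk => (h.pos hc1 k (by omega)).trans (h (k + 1) (by omega) hk).1.1

lemma log_div_div_log_le (h : IsGreedyPartition σ ε U K c) (hc1 : 0 < c 1) {t : ℝ}
    (ht : 1 < t) (hstep : ∀ a b, 0 < a → PhiF σ a b ≤ ε → PhiG σ a b ≤ ε → b ≤ a * t) :
    log (c (K + 1) / c 1) / log t ≤ K := by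
  rw [div_le_iff₀ (log_pos ht)]
  refine log_div_le_of_le_mul (x := fun k => c (k + 1)) hc1 (h.pos hc1 K le_rfl)
    (zero_lt_one.trans ht) fun k hk => ?_
  obtain ⟨-, hF, hG, -⟩ := h (k + 1) (by omega) hk
  rw [mul_comm]
  exact hstep _ _ (h.pos hc1 k hk.le) hF hG

lemma exp_mul_le (h : IsGreedyPartition σ ε U K c) (hc1 : 0 < c 1) {ℓ : ℝ} (hℓ : 0 < ℓ)
    (hgood : ∀ a b, 0 < a → a < b → log (b / a) ≤ ℓ → PhiF σ a b ≤ ε ∧ PhiG σ a b ≤ ε) :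
    ∀ k < K - 1, exp ℓ * c (k + 1) ≤ c (k + 1 + 1) := by
  intro k hk
  have hck := h.pos hc1 k (by omega)
  obtain ⟨⟨hlt, hle⟩, -, -, hmax⟩ := h (k + 1) (by omega) (by omega)
  obtain ⟨⟨hnext_lt, hnext_le⟩, -⟩ := h (k + 1 + 1) (by omega) (by omega)
  -- `u` is admissible at step `k + 1`, and it is not `U` because `c (k + 2) < U`.
  set u := min (exp ℓ * c (k + 1)) U
  have hcu : c (k + 1) < u := lt_min (lt_mul_left hck (one_lt_exp_iff.2 hℓ)) (hlt.trans_le hle)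
  have hlog : log (u / c (k + 1)) ≤ ℓ := by
    rw [log_le_iff_le_exp (div_pos (hck.trans hcu) hck), div_le_iff₀ hck]
    exact min_le_left _ _
  obtain ⟨hF, hG⟩ := hgood _ _ hck hcu hlog
  have hu := hmax u ⟨hcu, min_le_right _ _⟩ hF hG
  have hexp_lt : exp ℓ * c (k + 1) < U :=
    (min_lt_iff.1 (hu.trans_lt (hnext_lt.trans_le hnext_le))).resolve_right (lt_irrefl U)
  exact (min_eq_left hexp_lt.le).ge.trans hu

lemma sub_one_mul_le_log_div (h : IsGreedyPartition σ ε U K c) (hc1 : 0 < c 1) (hK : 1 ≤ K)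
    {ℓ : ℝ} (hℓ : 0 < ℓ)
    (hgood : ∀ a b, 0 < a → a < b → log (b / a) ≤ ℓ → PhiF σ a b ≤ ε ∧ PhiG σ a b ≤ ε) :
    (K - 1) * ℓ ≤ log (c (K + 1) / c 1) := by
  have hcount := mul_log_le_log_div_of_mul_le (x := fun k => c (k + 1)) (n := K - 1) hc1
    (exp_pos ℓ) (h.exp_mul_le hc1 hℓ hgood)
  rw [log_exp, Nat.cast_sub hK, Nat.cast_one, Nat.sub_add_cancel hK] at hcount
  obtain ⟨⟨hlt, -⟩, -⟩ := h K hK le_rfl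
  have hcK := h.pos hc1 (K - 1) (by omega)
  rw [Nat.sub_add_cancel hK] at hcK
  exact hcount.trans (log_le_log (div_pos hcK hc1) (div_le_div_of_nonneg_right hlt.le hc1.le))

end IsGreedyPartition

lemma one_div_min_le_add {a b : ℝ} (ha : 0 < a) (hb : 0 < b) :
    1 / min a b ≤ 1 / a + 1 / b := by
  have := one_div_pos.2 ha
  have := one_div_pos.2 hb
  rcases min_choice a b with h | h <;> rw [h] <;> linarith

/-- Theorem 4: bounds on the number K of sub-intervals produced by the greedy
discretization procedure (Algorithm 1). -/
theorem stmt_14 (σ ε L U : ℝ) (hσ0 : 0 < σ) (hσ1 : σ < 1)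
    (hε0 : 0 < ε) (hε1 : ε < 1 - (2 : ℝ) ^ (σ - 1))
    (hL : 0 < L) (hLU : L < U)
    (K : ℕ) (hK : 1 ≤ K) (c : ℕ → ℝ)
    (hc1 : c 1 = L) (hcK : c (K + 1) = U)
    (hgreedy : ∀ k, 1 ≤ k → k ≤ K →
      c (k + 1) ∈ Set.Ioc (c k) U ∧
      PhiF σ (c k) (c (k + 1)) ≤ ε ∧ PhiG σ (c k) (c (k + 1)) ≤ ε ∧
      ∀ u ∈ Set.Ioc (c k) U, PhiF σ (c k) u ≤ ε → PhiG σ (c k) u ≤ ε → u ≤ c (k + 1))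
    (tf : ℝ) (htf : 1 < tf)
    (htfeq : (tf ^ (σ - 1) + 1) / (tf + 1) ^ (σ - 1) = (2 : ℝ) ^ (2 - σ) * (1 + ε))
    (tg : ℝ) (htg : 1 < tg)
    (htgeq : (tg ^ σ + 1) / (tg + 1) ^ σ = (2 : ℝ) ^ (1 - σ) * (1 - ε)) :
    Real.log (U / L) * max (1 / Real.log tf) (1 / Real.log tg) ≤ (K : ℝ) ∧
    (K : ℝ) ≤ Real.log (U / L) * ((1 - σ) / Real.log (1 + ε) - σ / Real.log (1 - ε)) + 1 := by
  have hpart : IsGreedyPartition σ ε U K c := hgreedy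
  have hc1' : 0 < c 1 := hc1 ▸ hL
  have hε : 0 < 1 - ε := by linarith [rpow_pos_of_pos two_pos (σ - 1)]
  have hlogUL : 0 < log (U / L) := log_pos ((one_lt_div hL).2 hLU)
  constructor
  · rw [mul_max_of_nonneg _ _ hlogUL.le, mul_one_div, mul_one_div, ← hc1, ← hcK]
    exact max_le
      (hpart.log_div_div_log_le hc1' htf fun a b ha hF _ => le_mul_of_PhiF_le hσ1 ha htf htfeq hF)
      (hpart.log_div_div_log_le hc1' htg fun a b ha _ hG =>
        le_mul_of_PhiG_le hσ0 hσ1 ha htg htgeq hG)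
  · set a := log (1 + ε) / (1 - σ)
    set b := -log (1 - ε) / σ
    have ha : 0 < a := div_pos (log_pos (by linarith)) (by linarith)
    have hb : 0 < b := div_pos (neg_pos.2 (log_neg hε (by linarith))) hσ0
    have hcount := hpart.sub_one_mul_le_log_div hc1' hK (lt_min ha hb)
      fun x y hx hxy hlog =>
        ⟨PhiF_le_of_log_div_le hσ1 (by linarith) hx hxy.le (hlog.trans (min_le_left _ _)),
          PhiG_le_of_log_div_le hσ0 hε hx hxy.le (hlog.trans (min_le_right _ _))⟩
    rw [hc1, hcK] at hcount
    calc (K : ℝ) = (K - 1) + 1 := by ring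
      _ ≤ log (U / L) * (1 / min a b) + 1 := by
        rw [mul_one_div]
        linarith [(le_div_iff₀ (lt_min ha hb)).2 hcount]
      _ ≤ log (U / L) * (1 / a + 1 / b) + 1 := by gcongr; exact one_div_min_le_add ha hb
      _ = _ := by
        simp only [a, b, one_div_div, div_neg]
        ring
end
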